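/- If F ∈ ℂ[x_1,…,x_n] is a homogeneous form of degree d ≥ 3 defining a smooth hypersurface in ℙ^{n−1} (i.e. F and its first partial derivatives have no common nonzero zero in ℂ^n), then dim_ℂ (F^⊥)_2 ≤ n(n−1)/2. -/

import Mathlib

/-!
Apolarity setup.  `S = ℂ[x_1,…,x_n]` and its dual ring `T = ℂ[α_1,…,α_n]` are both
realized as `MvPolynomial (Fin n) ℂ`; the apolarity action `Θ ⌟ F` (`contract Θ F`)
lets `α_i` act as the partial differentiation operator `∂/∂x_i`.
-/

open MvPolynomial

noncomputable section Apolarity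

/-- Partial derivatives on `ℂ[x_1,…,x_n]` commute. -/
lemma pderiv_pderiv_comm (n : ℕ) (i j : Fin n) (f : MvPolynomial (Fin n) ℂ) :
    pderiv i (pderiv j f) = pderiv j (pderiv i f) := by
  induction f using MvPolynomial.induction_on with
  | C a => simp
  | add p q hp hq => simp [hp, hq]
  | mul_X p k hp =>
    rcases eq_or_ne i k with rfl | hik
    · rcases eq_or_ne j i with rfl | hjk
      · rfl
      · simp only [pderiv_mul, pderiv_X_self, pderiv_X_of_ne hjk, pderiv_X_of_ne hjk.symm,
          map_add, map_zero, map_one, Derivation.map_one_eq_zero, mul_one, mul_zero,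
          add_zero, zero_add, hp]
    · rcases eq_or_ne j k with rfl | hjk
      · simp only [pderiv_mul, pderiv_X_self, pderiv_X_of_ne hik, pderiv_X_of_ne hik.symm,
          map_add, map_zero, map_one, Derivation.map_one_eq_zero, mul_one, mul_zero,
          add_zero, zero_add, hp]
      · simp only [pderiv_mul, pderiv_X_of_ne hik.symm, pderiv_X_of_ne hjk.symm, map_add,
          map_zero, mul_zero, add_zero, zero_add, hp]

variable (n : ℕ)

/-- The endomorphism `∂/∂x_i` of `S = ℂ[x_1,…,x_n]`. -/
def derOp (i : Fin n) : Module.End ℂ (MvPolynomial (Fin n) ℂ) :=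
  (pderiv i).toLinearMap

lemma derOp_commute (i j : Fin n) : Commute (derOp n i) (derOp n j) :=
  LinearMap.ext fun f => pderiv_pderiv_comm n i j f

/-- The commuting product of the operators `(∂/∂x_i)^(m i)`. -/
def piDiffHom : (Fin n → Multiplicative ℕ) →* Module.End ℂ (MvPolynomial (Fin n) ℂ) :=
  MonoidHom.noncommPiCoprod (fun i : Fin n => powersHom _ (derOp n i))
    (fun i j _ x y => ((derOp_commute n i j).pow_pow x y))

/-- The differential operator `∏ i, (∂/∂x_i)^(m i)` attached to an exponent vector `m`. -/
def diffMonoidHom : Multiplicative (Fin n →₀ ℕ) →* Module.End ℂ (MvPolynomial (Fin n) ℂ) :=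
  (piDiffHom n).comp
    (AddMonoidHom.toMultiplicative
      (Finsupp.coeFnAddHom : (Fin n →₀ ℕ) →+ (Fin n → ℕ)))

/-- The apolarity action of the dual ring `T = ℂ[α_1,…,α_n]` on `S = ℂ[x_1,…,x_n]`, as an
algebra homomorphism to differential operators: `α_i` acts as `∂/∂x_i`. -/
def apolarAlgHom :
    MvPolynomial (Fin n) ℂ →ₐ[ℂ] Module.End ℂ (MvPolynomial (Fin n) ℂ) :=
  AddMonoidAlgebra.lift ℂ _ (Fin n →₀ ℕ) (diffMonoidHom n)

variable {n}

/-- The apolarity action `Θ ⌟ F`: apply to `F` the differential operator obtained from `Θ`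
by substituting `∂/∂x_i` for the `i`-th (dual) variable. -/
def contract (Θ F : MvPolynomial (Fin n) ℂ) : MvPolynomial (Fin n) ℂ :=
  apolarAlgHom n Θ F

lemma apolarAlgHom_X (i : Fin n) : apolarAlgHom n (X i) = derOp n i := by
  classical
  have hX : (X i : MvPolynomial (Fin n) ℂ)
      = AddMonoidAlgebra.single (Finsupp.single i 1) (1 : ℂ) := rfl
  rw [hX]
  rw [show apolarAlgHom n (AddMonoidAlgebra.single (Finsupp.single i 1) (1:ℂ))
      = (1:ℂ) • diffMonoidHom n (Multiplicative.ofAdd (Finsupp.single i 1)) from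
    AddMonoidAlgebra.lift_single _ _ _]
  rw [one_smul]
  rw [diffMonoidHom]
  have harg : (AddMonoidHom.toMultiplicative
        (Finsupp.coeFnAddHom : (Fin n →₀ ℕ) →+ (Fin n → ℕ)))
        (Multiplicative.ofAdd (Finsupp.single i 1))
      = Pi.mulSingle (M := fun _ : Fin n => Multiplicative ℕ) i (Multiplicative.ofAdd 1) := by
    funext j
    rcases eq_or_ne j i with rfl | hj
    · show Multiplicative.ofAdd ((Finsupp.single j 1 : Fin n →₀ ℕ) j)
        = Pi.mulSingle (M := fun _ : Fin n => Multiplicative ℕ) j (Multiplicative.ofAdd 1) j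
      rw [Finsupp.single_eq_same, Pi.mulSingle_eq_same]
    · show Multiplicative.ofAdd ((Finsupp.single i 1 : Fin n →₀ ℕ) j)
        = Pi.mulSingle (M := fun _ : Fin n => Multiplicative ℕ) i (Multiplicative.ofAdd 1) j
      rw [Finsupp.single_apply, if_neg (Ne.symm hj), Pi.mulSingle_eq_of_ne hj]
      exact ofAdd_zero
  refine (congrArg (piDiffHom n) harg).trans ?_
  rw [piDiffHom]
  exact (MonoidHom.noncommPiCoprod_mulSingle _ _ _).trans rfl

/-- Sanity check: the dual variable `α_i` acts on `F` as `∂F/∂x_i`. -/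
@[simp] lemma contract_X (i : Fin n) (F : MvPolynomial (Fin n) ℂ) :
    contract (X i) F = pderiv i F := by
  rw [contract, apolarAlgHom_X]; rfl

/-- The apolar (annihilator) ideal `F^⊥ = {Θ ∈ T : Θ ⌟ F = 0}` of a polynomial `F`. -/
def apolarIdeal (F : MvPolynomial (Fin n) ℂ) : Ideal (MvPolynomial (Fin n) ℂ) where
  carrier := {Θ | contract Θ F = 0}
  zero_mem' := by simp [contract]
  add_mem' := by
    intro a b ha hb
    simp only [Set.mem_setOf_eq, contract, map_add, LinearMap.add_apply] at *
    rw [ha, hb, add_zero]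
  smul_mem' := by
    intro c x hx
    simp only [Set.mem_setOf_eq, smul_eq_mul, contract, map_mul, Module.End.mul_apply] at *
    rw [hx, map_zero]

@[simp] lemma mem_apolarIdeal {Θ F : MvPolynomial (Fin n) ℂ} :
    Θ ∈ apolarIdeal F ↔ contract Θ F = 0 := Iff.rfl

variable (n)

/-- The irrelevant maximal ideal `m = ⟨α_1,…,α_n⟩` of `T`. -/
def irrIdeal : Ideal (MvPolynomial (Fin n) ℂ) :=
  Ideal.span (Set.range X)

variable {n}

/-- The homogeneous ideal `I` has a minimal generator of degree `k`, i.e. `(I/mI)_k ≠ 0`: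
there is a homogeneous element of `I` of degree `k` not belonging to `m * I`. -/
def HasMinGenOfDegree (I : Ideal (MvPolynomial (Fin n) ℂ)) (k : ℕ) : Prop :=
  ∃ Θ, Θ ∈ I ∧ Θ.IsHomogeneous k ∧ Θ ∉ irrIdeal n * I

/-- The homogeneous ideal `I` has at least `r` minimal generators of degree `k`, i.e.
`dim_ℂ (I/mI)_k ≥ r`: there are `r` homogeneous degree-`k` elements of `I` that are
linearly independent modulo `m * I`. -/
def MinGensAtLeast (I : Ideal (MvPolynomial (Fin n) ℂ)) (k r : ℕ) : Prop :=
  ∃ Θ : Fin r → MvPolynomial (Fin n) ℂ,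
    (∀ i, Θ i ∈ I ∧ (Θ i).IsHomogeneous k) ∧
    ∀ c : Fin r → ℂ, (∑ i, c i • Θ i) ∈ irrIdeal n * I → ∀ i, c i = 0

/-- `F` is an `s`-fold direct sum of degree `d`: `F = F_1 + ⋯ + F_s` where the `F_i` are
nonzero degree-`d` forms in independent subspaces `V_i` of the space of linear forms with
`V = V_1 ⊕ ⋯ ⊕ V_s` (i.e. in disjoint sets of variables, up to linear change of variables;
`F_i ∈ S^d V_i` is expressed as membership in the subalgebra generated by `V_i`). -/
def IsSFoldDirectSum (F : MvPolynomial (Fin n) ℂ) (d s : ℕ) : Prop :=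
  ∃ (V : Fin s → Submodule ℂ (MvPolynomial (Fin n) ℂ))
    (G : Fin s → MvPolynomial (Fin n) ℂ),
    (∀ i, V i ≤ homogeneousSubmodule (Fin n) ℂ 1) ∧
    iSupIndep V ∧
    (⨆ i, V i) = homogeneousSubmodule (Fin n) ℂ 1 ∧
    (∀ i, G i ≠ 0 ∧ (G i).IsHomogeneous d ∧ G i ∈ Algebra.adjoin ℂ (V i : Set _)) ∧
    F = ∑ i, G i

/-- `F` is a direct sum: `F = F₁ + F₂` with `F₁ ∈ S^d V₁`, `F₂ ∈ S^d V₂` nonzero and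
`V = V₁ ⊕ V₂`. -/
def IsDirectSum (F : MvPolynomial (Fin n) ℂ) (d : ℕ) : Prop :=
  IsSFoldDirectSum F d 2

/-- `F` is a limit (as `t → 0`) of `s`-fold direct sums of degree `d`. -/
def IsLimitOfSFoldDirectSums (F : MvPolynomial (Fin n) ℂ) (d s : ℕ) : Prop :=
  ∃ G : ℂ → MvPolynomial (Fin n) ℂ,
    (∀ t : ℂ, t ≠ 0 → IsSFoldDirectSum (G t) d s) ∧
    ∀ m : Fin n →₀ ℕ,
      Filter.Tendsto (fun t => MvPolynomial.coeff m (G t))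
        (nhdsWithin (0 : ℂ) {(0 : ℂ)}ᶜ) (nhds (MvPolynomial.coeff m F))

/-- `F` is a limit of direct sums. -/
def IsLimitOfDirectSums (F : MvPolynomial (Fin n) ℂ) (d : ℕ) : Prop :=
  IsLimitOfSFoldDirectSums F d 2

/-- `F` is concise: `(F^⊥)_1 = 0`, i.e. `F` cannot be written using fewer variables. -/
def Concise (F : MvPolynomial (Fin n) ℂ) : Prop :=
  ∀ Θ : MvPolynomial (Fin n) ℂ, Θ.IsHomogeneous 1 → contract Θ F = 0 → Θ = 0

end Apolarity

/-!
The catalecticant `Θ ↦ Θ ⌟ F` maps the `n(n+1)/2`-dimensional space of quadrics of `T` onto a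
space `W` of forms with kernel `(F^⊥)₂`. If `dim (F^⊥)₂ > n(n-1)/2`, then `dim W < n`, so the
coordinates of `c ↦ ∑ c_i c_j ∂_i ∂_j F` in a basis of `W` are fewer than `n` quadratic forms
in `c`; by Krull's height theorem they have a common zero `c ≠ 0`. Then the second derivative
of `F` along `c` vanishes, and Euler's formula for the form `∂_j F` of degree `d - 1 ≥ 2` gives
`∂_j F (c) = 0`, so `c` is a singular point of `F = 0`.
-/

namespace MvPolynomial

section Translate

variable {R σ : Type*} [CommRing R]

noncomputable def translate (v : σ → R) : MvPolynomial σ R ≃ₐ[R] MvPolynomial σ R :=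
  AlgEquiv.ofAlgHom (aeval fun i => X i + C (v i)) (aeval fun i => X i - C (v i))
    (by ext i; simp) (by ext i; simp)

@[simp] lemma eval_translate (v x : σ → R) (f : MvPolynomial σ R) :
    eval x (translate v f) = eval (x + v) f := by
  change aeval x (aeval _ f) = aeval (x + v) f
  rw [← AlgHom.comp_apply, comp_aeval]
  congr 2
  ext i
  simp

end Translate

section Nullstellensatz

variable {K σ : Type*} [Field K]

lemma comap_translate_vanishingIdeal_singleton (v x : σ → K) :
    (vanishingIdeal K {x}).comap (translate v) = vanishingIdeal K {x + v} := by
  ext f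
  simp

lemma mem_zeroLocus_span_range_iff {ι : Type*} (f : ι → MvPolynomial σ K) (x : σ → K) :
    x ∈ zeroLocus K (Ideal.span (Set.range f)) ↔ ∀ i, eval x (f i) = 0 := by
  rw [mem_zeroLocus_iff]
  refine ⟨fun h i => h _ (Ideal.subset_span ⟨i, rfl⟩), fun h p hp => ?_⟩
  refine (mem_vanishingIdeal_singleton_iff x p).1 (Ideal.span_le.2 ?_ hp)
  rintro _ ⟨i, rfl⟩
  exact (mem_vanishingIdeal_singleton_iff x _).2 (h i)

variable [IsAlgClosed K] [Fintype σ]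

/-- Translations act transitively on the maximal ideals, so they all have the same height, which
is therefore the Krull dimension. -/
lemma height_vanishingIdeal_singleton (x : σ → K) :
    (vanishingIdeal K {x} : Ideal (MvPolynomial σ K)).height = Fintype.card σ := by
  have htranslate (y : σ → K) :
      (vanishingIdeal K {y} : Ideal (MvPolynomial σ K)).height = (vanishingIdeal K {x}).height :=
    calc (vanishingIdeal K {y} : Ideal (MvPolynomial σ K)).height
        = ((vanishingIdeal K {x}).comap (translate (y - x)).toRingEquiv).height := by
          rw [← add_sub_cancel x y, ← comap_translate_vanishingIdeal_singleton, add_sub_cancel]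
          rfl
      _ = (vanishingIdeal K {x}).height := RingEquiv.height_comap _ _
  have hsup : ⨆ (I : Ideal (MvPolynomial σ K)) (_ : I.IsMaximal), I.height =
      (vanishingIdeal K {x} : Ideal (MvPolynomial σ K)).height := by
    refine le_antisymm (iSup₂_le fun I hI => ?_) (le_iSup₂_of_le _ inferInstance le_rfl)
    obtain ⟨y, rfl⟩ := isMaximal_iff_eq_vanishingIdeal_singleton.1 hI
    exact (htranslate y).le
  have hdim := Ideal.sup_isMaximal_height_eq_ringKrullDim (R := MvPolynomial σ K)
  rw [hsup, ringKrullDim_of_isNoetherianRing, ringKrullDim_eq_zero_of_field, zero_add,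
    Nat.card_eq_fintype_card] at hdim
  exact_mod_cast hdim

theorem zeroLocus_span_range_ne_singleton {m : ℕ} (f : Fin m → MvPolynomial σ K)
    (hm : m < Fintype.card σ) (x : σ → K) : zeroLocus K (Ideal.span (Set.range f)) ≠ {x} := by
  classical
  intro hzero
  have hmin : vanishingIdeal K {x} ∈ (Ideal.span (Set.range f)).minimalPrimes := by
    rw [← Ideal.radical_minimalPrimes, ← vanishingIdeal_zeroLocus_eq_radical (K := K), hzero,
      Ideal.minimalPrimes_eq_subsingleton_self]
    rfl
  have hkrull := Ideal.height_le_card_of_mem_minimalPrimes_span_finset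
    (s := Finset.univ.image f) (by simpa using hmin)
  rw [height_vanishingIdeal_singleton] at hkrull
  have hcard := (Finset.card_image_le (s := Finset.univ) (f := f)).trans_eq (Finset.card_fin m)
  have : Fintype.card σ ≤ (Finset.univ.image f).card := by exact_mod_cast hkrull
  omega

theorem exists_ne_zero_forall_eval_eq_zero {m : ℕ} (f : Fin m → MvPolynomial σ K)
    (hm : m < Fintype.card σ) (hf : ∀ l, eval 0 (f l) = 0) :
    ∃ x ≠ 0, ∀ l, eval x (f l) = 0 := by
  by_contra! h
  refine zeroLocus_span_range_ne_singleton f hm 0 (Set.eq_singleton_iff_unique_mem.2 ⟨?_, ?_⟩)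
  · exact (mem_zeroLocus_span_range_iff f 0).2 hf
  · intro x hx
    by_contra hx0
    obtain ⟨l, hl⟩ := h x hx0
    exact hl ((mem_zeroLocus_span_range_iff f x).1 hx l)

theorem exists_ne_zero_sum_mul_smul_eq_zero {E : Type*} [AddCommGroup E] [Module K E]
    [FiniteDimensional K E] (hE : Module.finrank K E < Fintype.card σ) (v : σ → σ → E) :
    ∃ c : σ → K, c ≠ 0 ∧ ∑ i, ∑ j, (c i * c j) • v i j = 0 := by
  let b := Module.finBasis K E
  let q (l : Fin (Module.finrank K E)) : MvPolynomial σ K :=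
    ∑ i, ∑ j, C (b.repr (v i j) l) * (X i * X j)
  have heval (c : σ → K) (l) : eval c (q l) = b.repr (∑ i, ∑ j, (c i * c j) • v i j) l := by
    simp [q, Finsupp.finsetSum_apply, mul_comm]
  obtain ⟨c, hc, hzero⟩ := exists_ne_zero_forall_eval_eq_zero q hE (by simp [q])
  refine ⟨c, hc, b.repr.injective (Finsupp.ext fun l => ?_)⟩
  rw [← heval, hzero l, map_zero, Finsupp.zero_apply]

end Nullstellensatz

theorem finrank_homogeneousSubmodule {K σ : Type*} [Field K] [Fintype σ] (k : ℕ) :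
    Module.finrank K (homogeneousSubmodule σ K k) = (Fintype.card σ + k - 1).choose k := by
  classical
  rw [homogeneousSubmodule_eq_finsupp_supported, ← restrictSupport,
    Module.finrank_eq_nat_card_basis (basisRestrictSupport K {d : σ →₀ ℕ | d.degree = k}),
    ← Nat.card_eq_fintype_card, ← Sym.natCard_sym_eq_choose]
  exact Nat.card_congr ((Sym.equivNatSum σ k).trans (Equiv.subtypeEquivRight fun d => by
    simp [Finsupp.degree_apply, Finsupp.sum])).symm

section DirectionalDerivative

lemma pderiv_comm {R σ : Type*} [CommSemiring R] (i j : σ) (f : MvPolynomial σ R) :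
    pderiv i (pderiv j f) = pderiv j (pderiv i f) := by
  classical
  induction f using MvPolynomial.induction_on' with
  | monomial s a =>
    obtain rfl | hij := eq_or_ne i j
    · rfl
    simp only [pderiv_monomial, Finsupp.tsub_apply, Finsupp.single_eq_of_ne hij,
      Finsupp.single_eq_of_ne hij.symm, tsub_zero]
    rw [tsub_right_comm, mul_right_comm]
  | add p q hp hq => simp [hp, hq]

variable {K σ : Type*} [Field K] [Fintype σ]

noncomputable def dirDeriv (c : σ → K) (f : MvPolynomial σ K) : MvPolynomial σ K :=
  ∑ i, c i • pderiv i f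

lemma pderiv_dirDeriv (c : σ → K) (j : σ) (f : MvPolynomial σ K) :
    pderiv j (dirDeriv c f) = dirDeriv c (pderiv j f) := by
  simp [dirDeriv, pderiv_comm j]

lemma dirDeriv_dirDeriv (c : σ → K) (f : MvPolynomial σ K) :
    dirDeriv c (dirDeriv c f) = ∑ i, ∑ j, (c i * c j) • pderiv i (pderiv j f) := by
  simp [dirDeriv, Finset.smul_sum, smul_smul]

lemma IsHomogeneous.dirDeriv {f : MvPolynomial σ K} {k : ℕ} (hf : f.IsHomogeneous k)
    (c : σ → K) : (MvPolynomial.dirDeriv c f).IsHomogeneous (k - 1) :=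
  IsHomogeneous.sum _ _ _ fun i _ => by rw [smul_eq_C_mul]; exact hf.pderiv.C_mul _

lemma IsHomogeneous.eval_dirDeriv_self {f : MvPolynomial σ K} {k : ℕ} (hf : f.IsHomogeneous k)
    (c : σ → K) : eval c (MvPolynomial.dirDeriv c f) = k * eval c f := by
  simpa [MvPolynomial.dirDeriv] using congrArg (eval c) hf.sum_X_mul_pderiv

variable [CharZero K]

theorem eval_pderiv_eq_zero_of_dirDeriv_dirDeriv_eq_zero {f : MvPolynomial σ K} {d : ℕ}
    (hd : 3 ≤ d) (hf : f.IsHomogeneous d) {c : σ → K} (hc : dirDeriv c (dirDeriv c f) = 0)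
    (j : σ) : eval c (pderiv j f) = 0 := by
  have hfj : (pderiv j f).IsHomogeneous (d - 1) := hf.pderiv
  have key := (hfj.dirDeriv c).eval_dirDeriv_self c
  rw [hfj.eval_dirDeriv_self, ← pderiv_dirDeriv, ← pderiv_dirDeriv, hc, map_zero,
    map_zero] at key
  have hd1 : ((d - 1 : ℕ) : K) ≠ 0 := by exact_mod_cast (by omega : d - 1 ≠ 0)
  have hd2 : ((d - 1 - 1 : ℕ) : K) ≠ 0 := by exact_mod_cast (by omega : d - 1 - 1 ≠ 0)
  simpa [hd1, hd2] using key.symm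

theorem eval_eq_zero_of_forall_eval_pderiv_eq_zero {f : MvPolynomial σ K} {d : ℕ} (hd : d ≠ 0)
    (hf : f.IsHomogeneous d) {c : σ → K} (hc : ∀ j, eval c (pderiv j f) = 0) : eval c f = 0 := by
  simpa [dirDeriv, hc, hd] using hf.eval_dirDeriv_self c

end DirectionalDerivative

end MvPolynomial

theorem LinearMap.finrank_map_add_finrank_ker_inf {K V W : Type*} [Field K] [AddCommGroup V]
    [Module K V] [AddCommGroup W] [Module K W] (f : V →ₗ[K] W) (p : Submodule K V)
    [FiniteDimensional K p] :
    Module.finrank K (p.map f) + Module.finrank K ↥(LinearMap.ker f ⊓ p) = Module.finrank K p := by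
  rw [← LinearMap.range_domRestrict, ← (f.domRestrict p).finrank_range_add_finrank_ker,
    LinearMap.ker_domRestrict,
    ← (Submodule.comapSubtypeEquivOfLe (inf_le_right : LinearMap.ker f ⊓ p ≤ p)).finrank_eq,
    Submodule.comap_inf, Submodule.comap_subtype_self, inf_top_eq]

section Catalecticant

variable {n : ℕ}

lemma contract_mul (Θ Φ F : MvPolynomial (Fin n) ℂ) :
    contract (Θ * Φ) F = contract Θ (contract Φ F) := by
  simp [contract]

noncomputable def catalecticant (F : MvPolynomial (Fin n) ℂ) :
    MvPolynomial (Fin n) ℂ →ₗ[ℂ] MvPolynomial (Fin n) ℂ :=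
  LinearMap.applyₗ F ∘ₗ (apolarAlgHom n).toLinearMap

lemma catalecticant_apply (F Θ : MvPolynomial (Fin n) ℂ) : catalecticant F Θ = contract Θ F :=
  rfl

lemma ker_catalecticant (F : MvPolynomial (Fin n) ℂ) :
    LinearMap.ker (catalecticant F) = (apolarIdeal F).restrictScalars ℂ :=
  rfl

end Catalecticant

/-- If `F` of degree `d ≥ 3` defines a smooth hypersurface in `ℙ^{n-1}`
(no common nonzero zero of `F` and its first partials), then `dim_ℂ (F^⊥)₂ ≤ n(n-1)/2`. -/
theorem smooth_hypersurface_quadric_bound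
    (n d : ℕ) (hd : 3 ≤ d) (F : MvPolynomial (Fin n) ℂ) (hF : F.IsHomogeneous d)
    (hsmooth : ∀ a : Fin n → ℂ, a ≠ 0 →
      ¬ (MvPolynomial.eval a F = 0 ∧ ∀ i, MvPolynomial.eval a (pderiv i F) = 0)) :
    Module.finrank ℂ
      ↥((apolarIdeal F).restrictScalars ℂ ⊓ homogeneousSubmodule (Fin n) ℂ 2)
      ≤ n * (n - 1) / 2 := by
  set T₂ := homogeneousSubmodule (Fin n) ℂ 2
  have : FiniteDimensional ℂ T₂ := Module.Finite.iff_fg.2 (homogeneousSubmodule_fg _ _ 2)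
  have hrank := (catalecticant F).finrank_map_add_finrank_ker_inf T₂
  rw [ker_catalecticant, finrank_homogeneousSubmodule, Fintype.card_fin,
    show n + 2 - 1 = n + 1 by omega, Nat.choose_two_right, Nat.triangle_succ] at hrank
  by_contra! hbig
  have hW : Module.finrank ℂ (T₂.map (catalecticant F)) < Fintype.card (Fin n) := by
    rw [Fintype.card_fin]; omega
  obtain ⟨c, hc, hzero⟩ := exists_ne_zero_sum_mul_smul_eq_zero hW fun i j =>
    ⟨pderiv i (pderiv j F), X i * X j, (isHomogeneous_X ℂ i).mul (isHomogeneous_X ℂ j),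
      by rw [catalecticant_apply, contract_mul, contract_X, contract_X]⟩
  have hcF : dirDeriv c (dirDeriv c F) = 0 := by
    rw [dirDeriv_dirDeriv]
    simpa using congrArg Subtype.val hzero
  have hpderiv := eval_pderiv_eq_zero_of_dirDeriv_dirDeriv_eq_zero hd hF hcF
  exact hsmooth c hc ⟨eval_eq_zero_of_forall_eval_pderiv_eq_zero (by omega) hF hpderiv, hpderiv⟩
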